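/- arXiv:2604.19602 — 6 statements merged into one kernel-verified Lean document; each statement's English description precedes it below -/
import Mathlib

section
/- Let A, B be n×n complex positive semidefinite matrices with r = rank(B) ≥ 1. If B has no zero main diagonal entry and every principal submatrix of A of order n − r + 1 is positive definite, then the Hadamard product A ∘ B is positive definite. -/
open Matrix
open scoped Matrix ComplexOrder

/-- `mu m A` is the smallest of the eigenvalues of all `m × m` principal submatrices of `A`
(principal submatrices are obtained by selecting the same set of `m` row and column indices). -/
noncomputable def mu {n : ℕ} (m : ℕ) (A : Matrix (Fin n) (Fin n) ℂ) : ℝ :=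
  sInf {t : ℝ | ∃ f : Fin m → Fin n, Function.Injective f ∧
    ∃ h : (A.submatrix f f).IsHermitian, ∃ i : Fin m, t = h.eigenvalues i}

/-- The smallest eigenvalue of a Hermitian matrix. -/
noncomputable def lambdaMin {n : ℕ} {A : Matrix (Fin n) (Fin n) ℂ} (hA : A.IsHermitian) : ℝ :=
  ⨅ i, hA.eigenvalues i

/-- The largest eigenvalue of a Hermitian matrix. -/
noncomputable def lambdaMax {n : ℕ} {A : Matrix (Fin n) (Fin n) ℂ} (hA : A.IsHermitian) : ℝ :=
  ⨆ i, hA.eigenvalues i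

/-- The smallest positive eigenvalue of a Hermitian matrix. -/
noncomputable def lambdaMinPos {n : ℕ} {A : Matrix (Fin n) (Fin n) ℂ} (hA : A.IsHermitian) : ℝ :=
  sInf {t : ℝ | (∃ i, hA.eigenvalues i = t) ∧ 0 < t}

/-- The effective condition number of a positive semidefinite matrix: the ratio of its largest
and smallest positive eigenvalues. -/
noncomputable def kappaEff {n : ℕ} {B : Matrix (Fin n) (Fin n) ℂ} (hB : B.IsHermitian) : ℝ :=
  lambdaMax hB / lambdaMinPos hB

/-! Write `B = Cᴴ * C`. Then `x⋆ (A ⊙ B) x = ∑ k, (C k * x)⋆ A (C k * x)`, with `C k * x` the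
entrywise product of the `k`-th row of `C` and `x`; so if it vanishes, every `C k * x` lies in the
kernel of `A`, i.e. `A * diagonal x * Cᵀ = 0`, and `rank (A * diagonal x) + r ≤ n`. If `x` has at
least `n - r + 1` nonzero entries, a positive definite principal submatrix of `A` of that order
inside the support of `x` forces `rank (A * diagonal x) ≥ n - r + 1`, a contradiction. Otherwise,
since `B` has no zero diagonal entry, some `C k * x` is a nonzero kernel vector of `A` supported
on fewer than `n - r + 1` indices, which a positive definite principal submatrix of order
`n - r + 1` containing its support rules out. -/

open Finset

variable {ι κ : Type*} [Fintype ι]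

namespace Matrix

section PosDefSubmatrix

variable {R : Type*} [CommRing R] [PartialOrder R] [StarRing R]

theorem eq_zero_of_mulVec_eq_zero_of_posDef_submatrix [Fintype κ] {A : Matrix ι ι R}
    {f : κ → ι} (hf : Function.Injective f) (hA : (A.submatrix f f).PosDef) {v : ι → R}
    (hv : A *ᵥ v = 0) (hvf : ∀ i ∉ Set.range f, v i = 0) : v = 0 := by
  have hsub : A.submatrix f f *ᵥ (v ∘ f) = 0 := by
    funext a
    calc _ = (A *ᵥ v) (f a) :=
          Fintype.sum_of_injective f hf _ _ (fun i hi => by simp [hvf i hi]) fun _ => rfl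
      _ = 0 := by rw [hv, Pi.zero_apply]
  have hsub0 : v ∘ f = 0 := by
    by_contra h
    simpa [hsub] using hA.dotProduct_mulVec_pos h
  funext i
  by_cases hi : i ∈ Set.range f
  · obtain ⟨a, rfl⟩ := hi
    exact congrFun hsub0 a
  · exact hvf i hi

theorem eq_zero_of_mulVec_eq_zero_of_card_le {m : ℕ} {A : Matrix ι ι R}
    (hA : ∀ f : Fin m → ι, Function.Injective f → (A.submatrix f f).PosDef)
    (hm : m ≤ Fintype.card ι) {v : ι → R} (hv : A *ᵥ v = 0) {S : Finset ι} (hS : #S ≤ m)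
    (hvS : ∀ i ∉ S, v i = 0) : v = 0 := by
  obtain ⟨T, hST, -, rfl⟩ := exists_subsuperset_card_eq (subset_univ S) hS (by simpa)
  have hf : Function.Injective ((↑) ∘ T.equivFin.symm : Fin #T → ι) :=
    Subtype.val_injective.comp T.equivFin.symm.injective
  refine eq_zero_of_mulVec_eq_zero_of_posDef_submatrix hf (hA _ hf) hv
    fun i hi => hvS i fun hiS => hi ?_
  exact ⟨T.equivFin ⟨i, hST hiS⟩, by simp⟩

end PosDefSubmatrix

section RankMulDiagonal

variable {K : Type*} [Field K] [DecidableEq ι]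

theorem card_le_rank_mul_diagonal [Fintype κ] [DecidableEq κ] {A : Matrix ι ι K} {f : κ → ι}
    (hA : IsUnit (A.submatrix f f)) {x : ι → K} (hx : ∀ a, x (f a) ≠ 0) :
    Fintype.card κ ≤ (A * diagonal x).rank :=
  calc Fintype.card κ = (A.submatrix f f * diagonal (x ∘ f)).rank := by
        rw [rank_mul_eq_left_of_isUnit_det _ _ (by simpa [det_diagonal, prod_ne_zero_iff]),
          rank_of_isUnit _ hA]
    _ = ((A * diagonal x).submatrix f f).rank := by
        congr 1
        ext
        simp [mul_diagonal]
    _ ≤ (A * diagonal x).rank := rank_submatrix_le _ _ _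

theorem le_rank_mul_diagonal {m : ℕ} {A : Matrix ι ι K}
    (hA : ∀ f : Fin m → ι, Function.Injective f → IsUnit (A.submatrix f f)) {x : ι → K}
    {S : Finset ι} (hm : m ≤ #S) (hxS : ∀ i ∈ S, x i ≠ 0) : m ≤ (A * diagonal x).rank := by
  obtain ⟨R, hRS, rfl⟩ := exists_subset_card_eq hm
  have hf : Function.Injective ((↑) ∘ R.equivFin.symm : Fin #R → ι) :=
    Subtype.val_injective.comp R.equivFin.symm.injective
  simpa using card_le_rank_mul_diagonal (hA _ hf) fun a => hxS _ (hRS (R.equivFin.symm a).2)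

end RankMulDiagonal

open scoped MatrixOrder in
theorem PosSemidef.exists_eq_conjTranspose_mul_self {𝕜 : Type*} [RCLike 𝕜] {B : Matrix ι ι 𝕜}
    (hB : B.PosSemidef) : ∃ C : Matrix ι ι 𝕜, B = Cᴴ * C := by
  classical
  exact CStarAlgebra.nonneg_iff_eq_star_mul_self.mp hB.nonneg

theorem star_dotProduct_hadamard_conjTranspose_mul_self_mulVec {R : Type*} [CommRing R]
    [StarRing R] [Fintype κ] (A : Matrix ι ι R) (C : Matrix κ ι R) (x : ι → R) :
    star x ⬝ᵥ (A ⊙ (Cᴴ * C)) *ᵥ x = ∑ k, star (C k * x) ⬝ᵥ A *ᵥ (C k * x) := by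
  simp only [dotProduct, mulVec, hadamard_apply, mul_apply, conjTranspose_apply, Pi.star_apply,
    Pi.mul_apply, star_mul', Finset.mul_sum, Finset.sum_mul]
  conv_rhs => rw [Finset.sum_comm]
  refine sum_congr rfl fun i _ => ?_
  conv_rhs => rw [Finset.sum_comm]
  exact sum_congr rfl fun j _ => sum_congr rfl fun k _ => by ring

theorem PosSemidef.mulVec_mul_eq_zero_of_star_dotProduct_hadamard_mulVec_eq_zero {𝕜 : Type*}
    [RCLike 𝕜] [Fintype κ] {A : Matrix ι ι 𝕜} (hA : A.PosSemidef) (C : Matrix κ ι 𝕜)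
    {x : ι → 𝕜} (hx : star x ⬝ᵥ (A ⊙ (Cᴴ * C)) *ᵥ x = 0) (k : κ) : A *ᵥ (C k * x) = 0 := by
  rw [star_dotProduct_hadamard_conjTranspose_mul_self_mulVec,
    sum_eq_zero_iff_of_nonneg fun k _ => hA.dotProduct_mulVec_nonneg _] at hx
  exact (hA.dotProduct_mulVec_zero_iff _).mp (hx k (mem_univ k))

theorem mul_diagonal_mul_transpose_eq_zero {R : Type*} [CommRing R] [DecidableEq ι]
    {A : Matrix ι ι R} {C : Matrix κ ι R} {x : ι → R} (h : ∀ k, A *ᵥ (C k * x) = 0) :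
    A * diagonal x * Cᵀ = 0 := by
  ext i k
  have hik := congrFun (h k) i
  simp only [mulVec, dotProduct, Pi.mul_apply, Pi.zero_apply] at hik
  rw [mul_apply, Matrix.zero_apply, ← hik]
  exact sum_congr rfl fun j _ => by rw [mul_diagonal, transpose_apply]; ring

end Matrix

/-- **Theorem (Yang et al.).** Let `A, B` be `n × n` complex positive semidefinite matrices with
`r = rank B ≥ 1`. If `B` has no zero main diagonal entry and every principal submatrix of `A` of
order `n - r + 1` is positive definite, then the Hadamard product `A ⊙ B` is positive definite. -/
theorem stmt_0 {n : ℕ} (A B : Matrix (Fin n) (Fin n) ℂ)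
    (hA : A.PosSemidef) (hB : B.PosSemidef) (r : ℕ) (hr : r = B.rank) (hr1 : 1 ≤ r)
    (hdiag : ∀ i, B i i ≠ 0)
    (hsub : ∀ f : Fin (n - r + 1) → Fin n, Function.Injective f → (A.submatrix f f).PosDef) :
    (A ⊙ B).PosDef := by
  classical
  have hAB := hA.hadamard hB
  obtain ⟨C, rfl⟩ := hB.exists_eq_conjTranspose_mul_self
  rw [rank_conjTranspose_mul_self] at hr
  refine posDef_iff_dotProduct_mulVec.mpr ⟨hAB.isHermitian, fun x hx =>
    (hAB.dotProduct_mulVec_nonneg x).lt_of_ne' fun hquad => ?_⟩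
  have hker := hA.mulVec_mul_eq_zero_of_star_dotProduct_hadamard_mulVec_eq_zero C hquad
  obtain ⟨i₀, hi₀⟩ : ∃ i, x i ≠ 0 := Function.ne_iff.mp hx
  set S : Finset (Fin n) := {i | x i ≠ 0}
  rcases le_or_gt (n - r + 1) #S with hS | hS
  · have hrank := le_rank_mul_diagonal (fun f hf => (hsub f hf).isUnit) hS
      fun i hi => by simpa [S] using hi
    have hsum := rank_add_rank_le_card_of_mul_eq_zero (mul_diagonal_mul_transpose_eq_zero hker)
    rw [rank_transpose, ← hr, Fintype.card_fin] at hsum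
    omega
  · obtain ⟨k, hk⟩ : ∃ k, C k i₀ ≠ 0 := by
      by_contra! h
      exact hdiag i₀ (by simp [mul_apply, h])
    have hzero := eq_zero_of_mulVec_eq_zero_of_card_le hsub (by simpa using ⟨i₀.pos, hr1⟩)
      (hker k) hS.le fun i hi => by simp_all [S]
    exact mul_ne_zero hk hi₀ (congrFun hzero i₀)
end

section
/- Let A, B = [b_ij] be n×n complex positive semidefinite matrices with r = rank(B) ≥ 1. Suppose that for every rank-r orthogonal projection P in M_n one has A ∘ P ⪰ μ_{n−r+1}(A) (I ∘ P). Then A ∘ B ⪰ (μ_{n−r+1}(A)/κ_eff(B)) (I ∘ B). -/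
open Matrix
open scoped Matrix ComplexOrder

/-!
Let `P` be the orthogonal projection onto the range of `B`, i.e. `1_{x ≠ 0}(B)`. Spectrally,
`λ_r P ⪯ B ⪯ λ_1 P`, and by the Schur product theorem Hadamard multiplication by a positive
semidefinite matrix is monotone for `⪯`. Hence, with `μ = μ_{n-r+1}(A)`,
`A ∘ B ⪰ λ_r (A ∘ P) ⪰ λ_r μ (I ∘ P) ⪰ (λ_r μ / λ_1) (I ∘ B)`.
-/

open scoped MatrixOrder

namespace Matrix

variable {𝕜 n : Type*} [RCLike 𝕜]

theorem PosSemidef.hadamard_le_hadamard_left {A X Y : Matrix n n 𝕜} (hA : A.PosSemidef)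
    (h : X ≤ Y) : A ⊙ X ≤ A ⊙ Y := by
  rw [le_iff] at h ⊢
  convert hA.hadamard h using 1
  ext i j
  simp [mul_sub]

variable [Fintype n] [DecidableEq n]

theorem IsHermitian.rank_cfc {A : Matrix n n 𝕜} (hA : A.IsHermitian) (f : ℝ → ℝ) :
    (cfc f A).rank = Fintype.card {i // f (hA.eigenvalues i) ≠ 0} := by
  rw [hA.cfc_eq, IsHermitian.cfc, Unitary.conjStarAlgAut_apply, ← Unitary.coe_star]
  simp [-isUnit_iff_ne_zero, -Unitary.coe_star, rank_diagonal]

theorem PosSemidef.exists_eigenvalues_pos {A : Matrix n n 𝕜} (hA : A.PosSemidef)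
    (h : A.rank ≠ 0) : ∃ i, 0 < hA.1.eigenvalues i := by
  rw [hA.1.rank_eq_card_non_zero_eigs, Ne, Fintype.card_eq_zero_iff, not_isEmpty_iff] at h
  obtain ⟨i, hi⟩ := h.some
  exact ⟨i, (hA.eigenvalues_nonneg i).lt_of_ne' hi⟩

noncomputable def supportProj (B : Matrix n n 𝕜) : Matrix n n 𝕜 :=
  cfc (fun x : ℝ => if x = 0 then 0 else 1) B

theorem isHermitian_supportProj (B : Matrix n n 𝕜) : (supportProj B).IsHermitian :=
  cfc_predicate _ B

theorem supportProj_mul_self (B : Matrix n n 𝕜) :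
    supportProj B * supportProj B = supportProj B := by
  rw [supportProj, ← cfc_mul _ _ B (B.finite_real_spectrum.continuousOn _)
    (B.finite_real_spectrum.continuousOn _)]
  congr 1
  ext x
  split_ifs <;> simp

theorem IsHermitian.rank_supportProj {B : Matrix n n 𝕜} (hB : B.IsHermitian) :
    (supportProj B).rank = B.rank := by
  rw [supportProj, hB.rank_cfc, hB.rank_eq_card_non_zero_eigs]
  exact Fintype.card_congr (Equiv.subtypeEquivRight fun i => by split_ifs <;> simp [*])

theorem IsHermitian.smul_supportProj_le {B : Matrix n n 𝕜} (hB : B.IsHermitian) {c : ℝ}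
    (hc : ∀ i, hB.eigenvalues i ≠ 0 → c ≤ hB.eigenvalues i) :
    c • supportProj B ≤ B := by
  conv_rhs => rw [← cfc_id' ℝ B]
  rw [supportProj, ← cfc_const_mul _ _ B (B.finite_real_spectrum.continuousOn _)]
  refine cfc_mono (fun x hx => ?_) (B.finite_real_spectrum.continuousOn _)
  obtain ⟨i, rfl⟩ := hB.spectrum_real_eq_range_eigenvalues ▸ hx
  split_ifs with h
  · simp [h]
  · simpa using hc i h

theorem IsHermitian.le_smul_supportProj {B : Matrix n n 𝕜} (hB : B.IsHermitian) {c : ℝ}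
    (hc : ∀ i, hB.eigenvalues i ≤ c) : B ≤ c • supportProj B := by
  conv_lhs => rw [← cfc_id' ℝ B]
  rw [supportProj, ← cfc_const_mul _ _ B (B.finite_real_spectrum.continuousOn _)]
  refine cfc_mono (fun x hx => ?_) (B.finite_real_spectrum.continuousOn _)
    (B.finite_real_spectrum.continuousOn _)
  obtain ⟨i, rfl⟩ := hB.spectrum_real_eq_range_eigenvalues ▸ hx
  split_ifs with h
  · simp [h]
  · simpa using hc i

end Matrix

section EigenvalueBounds

variable {n : ℕ} {A : Matrix (Fin n) (Fin n) ℂ}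

theorem eigenvalues_le_lambdaMax (hA : A.IsHermitian) (i : Fin n) :
    hA.eigenvalues i ≤ lambdaMax hA :=
  le_ciSup (Set.finite_range _).bddAbove i

theorem lambdaMinPos_le_eigenvalues (hA : A.IsHermitian) {i : Fin n}
    (hi : 0 < hA.eigenvalues i) : lambdaMinPos hA ≤ hA.eigenvalues i :=
  csInf_le ⟨0, fun _ ht => ht.2.le⟩ ⟨⟨i, rfl⟩, hi⟩

theorem lambdaMinPos_pos (hA : A.IsHermitian) {i : Fin n} (hi : 0 < hA.eigenvalues i) :
    0 < lambdaMinPos hA := by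
  let S := {t : ℝ | (∃ i, hA.eigenvalues i = t) ∧ 0 < t}
  have hS : S.Finite := (Set.finite_range hA.eigenvalues).subset fun _ ht => ht.1
  exact (Set.Nonempty.csInf_mem (s := S) ⟨_, ⟨i, rfl⟩, hi⟩ hS).2

theorem mu_nonneg (hA : A.PosSemidef) (m : ℕ) : 0 ≤ mu m A :=
  Real.sInf_nonneg fun _ ⟨f, _, _, i, ht⟩ => ht ▸ (hA.submatrix f).eigenvalues_nonneg i

end EigenvalueBounds

/-- If `A ⊙ P ⪰ μ_{n-r+1}(A) (I ⊙ P)` for every rank-`r` orthogonal projection `P`, then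
`A ⊙ B ⪰ (μ_{n-r+1}(A)/κ_eff(B)) (I ⊙ B)`. -/
theorem stmt_1 {n : ℕ} (A B : Matrix (Fin n) (Fin n) ℂ)
    (hA : A.PosSemidef) (hB : B.PosSemidef) (r : ℕ) (hr : r = B.rank) (hr1 : 1 ≤ r)
    (hproj : ∀ P : Matrix (Fin n) (Fin n) ℂ, P.IsHermitian → P * P = P → P.rank = r →
      (A ⊙ P - ((mu (n - r + 1) A : ℝ) : ℂ) •
        ((1 : Matrix (Fin n) (Fin n) ℂ) ⊙ P)).PosSemidef) :
    (A ⊙ B - ((mu (n - r + 1) A / kappaEff hB.1 : ℝ) : ℂ) •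
      ((1 : Matrix (Fin n) (Fin n) ℂ) ⊙ B)).PosSemidef := by
  set μ := mu (n - r + 1) A
  set P := supportProj B
  obtain ⟨i, hi⟩ := hB.exists_eigenvalues_pos (by omega)
  have hmin_pos := lambdaMinPos_pos hB.1 hi
  have hmax_pos := hmin_pos.trans_le ((lambdaMinPos_le_eigenvalues hB.1 hi).trans
    (eigenvalues_le_lambdaMax hB.1 i))
  have hP : μ • (1 ⊙ P) ≤ A ⊙ P := by
    simpa only [Complex.coe_smul, ← le_iff] using hproj P (isHermitian_supportProj B)
      (supportProj_mul_self B) (hB.1.rank_supportProj.trans hr.symm)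
  have hscale : μ / kappaEff hB.1 * lambdaMax hB.1 = lambdaMinPos hB.1 * μ := by
    unfold kappaEff; field_simp
  rw [← le_iff, Complex.coe_smul]
  calc (μ / kappaEff hB.1) • (1 ⊙ B)
      ≤ (μ / kappaEff hB.1) • (1 ⊙ (lambdaMax hB.1 • P)) :=
        smul_le_smul_of_nonneg_left (PosSemidef.one.hadamard_le_hadamard_left
          (hB.1.le_smul_supportProj (eigenvalues_le_lambdaMax hB.1)))
          (div_nonneg (mu_nonneg hA _) (div_nonneg hmax_pos.le hmin_pos.le))
    _ = lambdaMinPos hB.1 • μ • (1 ⊙ P) := by rw [hadamard_smul, smul_smul, hscale, mul_smul]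
    _ ≤ lambdaMinPos hB.1 • (A ⊙ P) := smul_le_smul_of_nonneg_left hP hmin_pos.le
    _ = A ⊙ (lambdaMinPos hB.1 • P) := (hadamard_smul _ _ _).symm
    _ ≤ A ⊙ B := hA.hadamard_le_hadamard_left (hB.1.smul_supportProj_le fun j hj =>
        lambdaMinPos_le_eigenvalues hB.1 ((hB.eigenvalues_nonneg j).lt_of_ne' hj))
end

section
/- Let n ≥ 2 and let P ∈ M_n be a rank-r orthogonal projection, partitioned as a 2×2 block matrix with upper-left block P₁ ∈ M_{n−1}, upper-right block a column vector x ∈ ℂ^{n−1}, lower-left block x*, and lower-right scalar entry p, with 0 < p < 1. Let Q = P₁ − (1/p) x x*. Then the matrix R = Q + (1/‖x‖²) x x* = Q + (1/(p(1−p))) x x* is an orthogonal projection of rank r. -/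
/-! Reading `P * P = P` blockwise gives `P₁² = P₁ - x x*`, `P₁ x = (1 - p) x` and
`x* x = p (1 - p)`. Hence `‖x‖² = p (1 - p)` and `R = P₁ + (1 - p)⁻¹ x x*`, and these relations
make `R² = R`. An idempotent matrix has rank equal to its trace, and `tr R = tr P₁ + p = tr P`. -/

open Matrix
open scoped Matrix ComplexOrder

namespace Matrix

theorem rank_eq_trace_of_isIdempotentElem {K m : Type*} [Field K] [Fintype m]
    [DecidableEq m] {A : Matrix m m K} (hA : IsIdempotentElem A) : (A.rank : K) = A.trace := by
  have h : IsIdempotentElem (toLin' A) := hA.map toLinAlgEquiv'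
  rw [← trace_toLin'_eq, (LinearMap.IsIdempotentElem.isProj_range _ h).trace]
  rfl

theorem star_dotProduct_self_eq_sum_norm_sq {𝕜 m : Type*} [RCLike 𝕜] [Fintype m]
    (v : m → 𝕜) : star v ⬝ᵥ v = ((∑ i, ‖v i‖ ^ 2 : ℝ) : 𝕜) := by
  simp [dotProduct, RCLike.conj_mul]

theorem trace_fromBlocks {R l m : Type*} [AddCommMonoid R] [Fintype l] [Fintype m]
    (A : Matrix l l R) (B : Matrix l m R) (C : Matrix m l R) (D : Matrix m m R) :
    (fromBlocks A B C D).trace = A.trace + D.trace := by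
  simp [trace, Fintype.sum_sum_type]

section BorderedIdempotent

variable {K m : Type*} [Fintype m] {A : Matrix m m K} {x y : m → K} {p : K}

theorem border_relations_of_isIdempotentElem_fromBlocks [CommRing K]
    (h : IsIdempotentElem
      (fromBlocks A (replicateCol Unit x) (replicateRow Unit y) (of fun _ _ => p))) :
    A * A = A - vecMulVec x y ∧ A *ᵥ x = (1 - p) • x ∧ y ᵥ* A = (1 - p) • y ∧
      y ⬝ᵥ x = p * (1 - p) := by
  rw [IsIdempotentElem, fromBlocks_multiply, fromBlocks_inj] at h
  obtain ⟨h₁₁, h₁₂, h₂₁, h₂₂⟩ := h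
  refine ⟨by rw [vecMulVec_eq Unit]; exact eq_sub_of_add_eq h₁₁, ?_, ?_, ?_⟩
  · ext i
    have := congrFun₂ h₁₂ i ()
    simp only [add_apply, mul_apply, replicateCol_apply, of_apply, Fintype.sum_unique] at this
    simp only [mulVec, dotProduct, Pi.smul_apply, smul_eq_mul]
    linear_combination this
  · ext i
    have := congrFun₂ h₂₁ () i
    simp only [add_apply, mul_apply, replicateRow_apply, of_apply, Fintype.sum_unique] at this
    simp only [vecMul, dotProduct, Pi.smul_apply, smul_eq_mul]
    linear_combination this
  · have := congrFun₂ h₂₂ () ()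
    rw [add_apply, replicateRow_mul_replicateCol_apply] at this
    simp only [mul_apply, of_apply, Fintype.sum_unique] at this
    linear_combination this

variable [Field K]

theorem isIdempotentElem_add_inv_one_sub_smul_vecMulVec (hAA : A * A = A - vecMulVec x y)
    (hAx : A *ᵥ x = (1 - p) • x) (hyA : y ᵥ* A = (1 - p) • y) (hyx : y ⬝ᵥ x = p * (1 - p))
    (hp : p ≠ 1) : IsIdempotentElem (A + (1 - p)⁻¹ • vecMulVec x y) := by
  have hAS : A * vecMulVec x y = (1 - p) • vecMulVec x y := by
    rw [mul_vecMulVec, hAx, smul_vecMulVec]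
  have hSA : vecMulVec x y * A = (1 - p) • vecMulVec x y := by
    rw [vecMulVec_mul, hyA, vecMulVec_smul]
  have hSS : vecMulVec x y * vecMulVec x y = (p * (1 - p)) • vecMulVec x y := by
    rw [vecMulVec_mul_vecMulVec, hyx, vecMulVec_smul]
  have hp' : 1 - p ≠ 0 := sub_ne_zero.mpr hp.symm
  simp only [IsIdempotentElem, add_mul, mul_add, Matrix.mul_smul, Matrix.smul_mul, hAA, hAS, hSA,
    hSS]
  match_scalars <;> field_simp
  ring

theorem trace_add_inv_one_sub_smul_vecMulVec (hyx : y ⬝ᵥ x = p * (1 - p)) (hp : p ≠ 1) :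
    (A + (1 - p)⁻¹ • vecMulVec x y).trace = A.trace + p := by
  have hp' : 1 - p ≠ 0 := sub_ne_zero.mpr hp.symm
  rw [trace_add, trace_smul, trace_vecMulVec, dotProduct_comm, hyx, smul_eq_mul,
    mul_comm p, inv_mul_cancel_left₀ hp']

end BorderedIdempotent

end Matrix

theorem stmt_6_general {n r : ℕ}
    (P₁ : Matrix (Fin (n - 1)) (Fin (n - 1)) ℂ) (x : Fin (n - 1) → ℂ) (p : ℝ)
    (P : Matrix (Fin (n - 1) ⊕ Unit) (Fin (n - 1) ⊕ Unit) ℂ)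
    (hPdef : P = fromBlocks P₁ (replicateCol Unit x) (replicateRow Unit (star x)) (of fun _ _ => (p : ℂ)))
    (hHerm : P.IsHermitian) (hIdem : P * P = P) (hrank : P.rank = r)
    (hp0 : 0 < p) (hp1 : p < 1)
    (Q : Matrix (Fin (n - 1)) (Fin (n - 1)) ℂ)
    (hQdef : Q = P₁ - ((1 / p : ℝ) : ℂ) • vecMulVec x (star x))
    (R : Matrix (Fin (n - 1)) (Fin (n - 1)) ℂ)
    (hRdef : R = Q + ((1 / ∑ i, ‖x i‖ ^ 2 : ℝ) : ℂ) • vecMulVec x (star x)) :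
    R = Q + ((1 / (p * (1 - p)) : ℝ) : ℂ) • vecMulVec x (star x) ∧
      R.IsHermitian ∧ R * R = R ∧ R.rank = r := by
  subst hPdef
  obtain ⟨hAA, hAx, hyA, hyx⟩ := border_relations_of_isIdempotentElem_fromBlocks hIdem
  have hp : (p : ℂ) ≠ 1 := by exact_mod_cast hp1.ne
  have hnorm : ∑ i, ‖x i‖ ^ 2 = p * (1 - p) := by
    rw [star_dotProduct_self_eq_sum_norm_sq] at hyx
    exact Complex.ofReal_injective (hyx.trans (by push_cast; ring))
  have hR : R = P₁ + (1 - (p : ℂ))⁻¹ • vecMulVec x (star x) := by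
    rw [hRdef, hQdef, hnorm]
    match_scalars
    · ring
    · have hp1' : 1 - p ≠ 0 := by linarith
      field_simp
      ring
  have hRidem : IsIdempotentElem R :=
    hR ▸ isIdempotentElem_add_inv_one_sub_smul_vecMulVec hAA hAx hyA hyx hp
  refine ⟨by rw [hRdef, hnorm], ?_, hRidem, ?_⟩
  · rw [hR]
    exact (isHermitian_fromBlocks_iff.mp hHerm).1.add
      ((posSemidef_vecMulVec_self_star x).isHermitian.smul (by simp [IsSelfAdjoint]))
  · apply Nat.cast_injective (R := ℂ)
    rw [← hrank, rank_eq_trace_of_isIdempotentElem hRidem, rank_eq_trace_of_isIdempotentElem hIdem,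
      hR, trace_add_inv_one_sub_smul_vecMulVec hyx hp, trace_fromBlocks]
    simp [trace]

/-- For a rank-`r` orthogonal projection `P` partitioned with upper-left block `P₁`, border
vector `x` and lower-right entry `p` with `0 < p < 1` and `Q = P₁ - (1/p) x x*`: the matrix
`R = Q + (1/‖x‖²) x x* = Q + (1/(p(1-p))) x x*` is an orthogonal projection of rank `r`. -/
theorem stmt_6 {n r : ℕ} (hn : 2 ≤ n)
    (P₁ : Matrix (Fin (n - 1)) (Fin (n - 1)) ℂ) (x : Fin (n - 1) → ℂ) (p : ℝ)
    (P : Matrix (Fin (n - 1) ⊕ Unit) (Fin (n - 1) ⊕ Unit) ℂ)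
    (hPdef : P = fromBlocks P₁ (replicateCol Unit x) (replicateRow Unit (star x)) (of fun _ _ => (p : ℂ)))
    (hHerm : P.IsHermitian) (hIdem : P * P = P) (hrank : P.rank = r)
    (hp0 : 0 < p) (hp1 : p < 1)
    (Q : Matrix (Fin (n - 1)) (Fin (n - 1)) ℂ)
    (hQdef : Q = P₁ - ((1 / p : ℝ) : ℂ) • vecMulVec x (star x))
    (R : Matrix (Fin (n - 1)) (Fin (n - 1)) ℂ)
    (hRdef : R = Q + ((1 / ∑ i, ‖x i‖ ^ 2 : ℝ) : ℂ) • vecMulVec x (star x)) :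
    R = Q + ((1 / (p * (1 - p)) : ℝ) : ℂ) • vecMulVec x (star x) ∧
      R.IsHermitian ∧ R * R = R ∧ R.rank = r :=
  stmt_6_general P₁ x p P hPdef hHerm hIdem hrank hp0 hp1 Q hQdef R hRdef
end

section
/- Let C ∈ M_n be a Hermitian complex matrix and let P ∈ M_n be a rank-r orthogonal projection with 1 ≤ r ≤ n. If every principal submatrix of C of order n − r + 1 is positive semidefinite, then the Hadamard product C ∘ P is positive semidefinite. -/
open Matrix
open scoped Matrix ComplexOrder

/-!
Write `1 - P = Aᴴ * A` where `A` has `d = n - r` orthonormal rows. Appending the unit row `eᵢ`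
to `A` gives a `(d + 1) × n` matrix `Rᵢ`, and by a Schur complement `det (Rᵢ * Rⱼᴴ) = P i j`.
Expanding this determinant by Cauchy–Binet writes `(d + 1)! • P` as a sum of rank-one matrices
`g * gᴴ`, where `g i` is the minor of `Rᵢ` on a fixed choice of `d + 1` columns, so `g` vanishes
off those columns. Hence `(d + 1)! • (C ⊙ P)` is a sum of the matrices
`C ⊙ (g * gᴴ) = diagonal g * C * (diagonal g)ᴴ`, each of which only sees a principal submatrix of
`C` of order `n - r + 1`.
-/

open Finset

namespace Matrix

section CauchyBinet

variable {R ι N : Type*} [CommRing R] [Fintype ι] [DecidableEq ι] [Fintype N]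

theorem det_mul_eq_sum_prod_mul_det_submatrix (F : Matrix ι N R) (G : Matrix N ι R) :
    det (F * G) = ∑ p : ι → N, (∏ x, G (p x) x) * det (F.submatrix id p) := by
  simp only [det_apply', mul_apply, prod_univ_sum, mul_sum, Fintype.piFinset_univ,
    submatrix_apply, id_eq]
  rw [sum_comm]
  refine sum_congr rfl fun p _ => sum_congr rfl fun σ _ => ?_
  rw [prod_mul_distrib]
  ring

/-- Cauchy–Binet, summed over all maps `ι → N` rather than over subsets of `N`: every
injective map is counted once for each of the `|ι|!` orderings of its image. -/
theorem sum_det_submatrix_mul_det_submatrix (F : Matrix ι N R) (G : Matrix N ι R) :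
    ∑ p : ι → N, det (F.submatrix id p) * det (G.submatrix p id)
      = (Fintype.card ι).factorial * det (F * G) := by
  have hG : ∀ p : ι → N, det (G.submatrix p id)
      = ∑ τ : Equiv.Perm ι, Equiv.Perm.sign τ • ∏ x, G (p (τ x)) x := by
    intro p
    simp [det_apply', Units.smul_def]
  calc ∑ p : ι → N, det (F.submatrix id p) * det (G.submatrix p id)
      = ∑ τ : Equiv.Perm ι, ∑ p : ι → N,
          Equiv.Perm.sign τ • (det (F.submatrix id p) * ∏ x, G (p (τ x)) x) := by
        simp_rw [hG, mul_sum, mul_smul_comm]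
        rw [sum_comm]
    _ = ∑ _τ : Equiv.Perm ι, ∑ q : ι → N, (∏ x, G (q x) x) * det (F.submatrix id q) := by
        refine sum_congr rfl fun τ _ => ?_
        refine Fintype.sum_equiv (Equiv.arrowCongr τ.symm (Equiv.refl N)) _ _ fun q => ?_
        have hF : F.submatrix id (Equiv.arrowCongr τ.symm (Equiv.refl N) q)
            = (F.submatrix id q).submatrix id τ := rfl
        simp only [hF, det_permute', Equiv.arrowCongr_apply, Equiv.coe_refl,
          Function.comp_apply, Equiv.symm_symm, id_eq]
        rw [Units.smul_def, zsmul_eq_mul]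
        ring
    _ = (Fintype.card ι).factorial * det (F * G) := by
        rw [sum_const, ← det_mul_eq_sum_prod_mul_det_submatrix, card_univ, Fintype.card_perm,
          nsmul_eq_mul]

end CauchyBinet

section Minors

variable {R m n : Type*} [CommRing R] [Fintype m] [DecidableEq m] [DecidableEq n]

def minorVec (A : Matrix m n R) (p : m ⊕ Unit → n) (i : n) : R :=
  det ((fromRows A (replicateRow Unit (Pi.single i 1))).submatrix id p)

theorem minorVec_eq_zero_of_notMem_range (A : Matrix m n R) {p : m ⊕ Unit → n} {i : n}
    (hi : i ∉ Set.range p) : minorVec A p i = 0 := by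
  refine det_eq_zero_of_row_eq_zero (Sum.inr ()) fun k => ?_
  have hk : p k ≠ i := fun h => hi ⟨k, h⟩
  simp [hk]

theorem minorVec_eq_zero_of_not_injective (A : Matrix m n R) {p : m ⊕ Unit → n}
    (hp : ¬ Function.Injective p) : minorVec A p = 0 := by
  obtain ⟨x, y, hxy, hne⟩ : ∃ x y, p x = p y ∧ x ≠ y := by
    simpa only [Function.Injective, not_forall, exists_prop] using hp
  funext i
  exact det_zero_of_column_eq hne fun k => by simp [hxy]

variable [Fintype n] [StarRing R]

theorem det_fromRows_mul_conjTranspose_fromRows {A : Matrix m n R} (hA : A * Aᴴ = 1)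
    (i j : n) :
    det (fromRows A (replicateRow Unit (Pi.single i 1))
        * (fromRows A (replicateRow Unit (Pi.single j 1)))ᴴ)
      = (1 - Aᴴ * A : Matrix n n R) i j := by
  rw [conjTranspose_fromRows_eq_fromCols_conjTranspose, fromRows_mul_fromCols, hA,
    det_fromBlocks_one₁₁, det_unique]
  simp [mul_apply, one_apply, Pi.single_apply, eq_comm]

theorem sum_vecMulVec_minorVec {A : Matrix m n R} (hA : A * Aᴴ = 1) :
    ∑ p, vecMulVec (minorVec A p) (star (minorVec A p))
      = ((Fintype.card m + 1).factorial : R) • (1 - Aᴴ * A) := by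
  ext i j
  have := sum_det_submatrix_mul_det_submatrix (fromRows A (replicateRow Unit (Pi.single i 1)))
    (fromRows A (replicateRow Unit (Pi.single j 1)))ᴴ
  simp only [← conjTranspose_submatrix, det_conjTranspose,
    det_fromRows_mul_conjTranspose_fromRows hA, Fintype.card_sum, Fintype.card_unit] at this
  simpa [sum_apply, vecMulVec_apply, minorVec] using this

end Minors

section Hadamard

variable {R m n : Type*} [CommRing R]

theorem hadamard_sum {ι : Type*} (C : Matrix m n R) (s : Finset ι) (M : ι → Matrix m n R) :
    C ⊙ ∑ k ∈ s, M k = ∑ k ∈ s, C ⊙ M k := by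
  ext i j
  simp [sum_apply, mul_sum]

variable [Fintype n] [DecidableEq n]

theorem diagonal_submatrix_mul_submatrix_one [Fintype m] {f : m → n}
    (hf : Function.Injective f) {g : n → R} (hg : ∀ i ∉ Set.range f, g i = 0) :
    (diagonal g).submatrix id f * (1 : Matrix n n R).submatrix f id = diagonal g := by
  ext i j
  conv_rhs => rw [← mul_one (diagonal g), mul_apply]
  rw [mul_apply]
  refine Fintype.sum_of_injective f hf _ _ (fun k hk => ?_) fun _ => rfl
  by_cases hik : i = k
  · simp [hik, hg k hk]
  · simp [hik]

variable [StarRing R]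

theorem submatrix_one_mul_mul_conjTranspose (C : Matrix n n R) (f : m → n) :
    (1 : Matrix n n R).submatrix f id * C * ((1 : Matrix n n R).submatrix f id)ᴴ
      = C.submatrix f f := by
  rw [conjTranspose_submatrix, conjTranspose_one, ← submatrix_id_id C,
    ← submatrix_mul _ _ _ _ _ Function.bijective_id,
    ← submatrix_mul _ _ _ _ _ Function.bijective_id]
  simp

theorem hadamard_vecMulVec_star (C : Matrix n n R) (g : n → R) :
    C ⊙ vecMulVec g (star g) = diagonal g * C * (diagonal g)ᴴ := by
  ext i j
  simp [vecMulVec_apply, diagonal_conjTranspose, mul_diagonal, diagonal_mul]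
  ring

theorem posSemidef_hadamard_vecMulVec_star [PartialOrder R] [Fintype m] {C : Matrix n n R}
    {f : m → n} (hf : Function.Injective f) (hC : (C.submatrix f f).PosSemidef) {g : n → R}
    (hg : ∀ i ∉ Set.range f, g i = 0) : (C ⊙ vecMulVec g (star g)).PosSemidef := by
  set E : Matrix n m R := (diagonal g).submatrix id f
  set S : Matrix m n R := (1 : Matrix n n R).submatrix f id
  have key : diagonal g * C * (diagonal g)ᴴ = E * (S * C * Sᴴ) * Eᴴ := by
    rw [← diagonal_submatrix_mul_submatrix_one hf hg]
    simp only [conjTranspose_mul, Matrix.mul_assoc]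
    rfl
  rw [hadamard_vecMulVec_star, key, submatrix_one_mul_mul_conjTranspose]
  exact hC.mul_mul_conjTranspose_same _

end Hadamard

section Projection

variable {𝕜 n : Type*} [RCLike 𝕜] [Fintype n] [DecidableEq n] {P : Matrix n n 𝕜}

namespace IsHermitian

theorem eigenvalues_eq_zero_or_one (hP : P.IsHermitian) (hP2 : P * P = P) (i : n) :
    hP.eigenvalues i = 0 ∨ hP.eigenvalues i = 1 := by
  have hPv := hP.mulVec_eigenvectorBasis i
  set v : n → 𝕜 := ⇑(hP.eigenvectorBasis i)
  have hv : v ≠ 0 := fun h =>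
    hP.eigenvectorBasis.orthonormal.ne_zero i (WithLp.ofLp_injective 2 h)
  have hsq : (hP.eigenvalues i * hP.eigenvalues i - hP.eigenvalues i) • v = 0 := by
    have := congrArg (P *ᵥ ·) hPv
    simp only [mulVec_mulVec, hP2, mulVec_smul] at this
    rw [sub_smul, mul_smul, ← hPv, ← this, sub_self]
  rw [← IsIdempotentElem.iff_eq_zero_or_one, IsIdempotentElem]
  simpa [sub_eq_zero, hv] using hsq

theorem card_eigenvalues_eq_zero (hP : P.IsHermitian) :
    Fintype.card {i // hP.eigenvalues i = 0} = Fintype.card n - P.rank := by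
  have := Fintype.card_subtype_le fun i => hP.eigenvalues i = 0
  rw [hP.rank_eq_card_non_zero_eigs, Fintype.card_subtype_compl]
  omega

theorem exists_mul_conjTranspose_eq_one_and_conjTranspose_mul_eq_one_sub
    (hP : P.IsHermitian) (hP2 : P * P = P) :
    ∃ A : Matrix {i // hP.eigenvalues i = 0} n 𝕜, A * Aᴴ = 1 ∧ Aᴴ * A = 1 - P := by
  set U : Matrix n n 𝕜 := ↑hP.eigenvectorUnitary
  have hUU : star U * U = 1 := Unitary.star_mul_self_of_mem hP.eigenvectorUnitary.2
  have hUU' : U * star U = 1 := Unitary.mul_star_self_of_mem hP.eigenvectorUnitary.2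
  have h1P : 1 - P = U * (1 - diagonal (RCLike.ofReal ∘ hP.eigenvalues)) * star U := by
    conv_lhs => rw [hP.spectral_theorem, Unitary.conjStarAlgAut_apply]
    rw [mul_sub, sub_mul, mul_one, hUU']
  refine ⟨(star U).submatrix Subtype.val id, ?_, ?_⟩
  · rw [conjTranspose_submatrix, ← star_eq_conjTranspose, star_star,
      ← submatrix_mul _ _ _ _ _ Function.bijective_id, hUU, submatrix_one _ Subtype.val_injective]
  · ext i j
    rw [h1P, mul_sub, mul_one, mul_apply, mul_apply]
    refine Fintype.sum_of_injective _ Subtype.val_injective _ _ (fun k hk => ?_) fun k => ?_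
    · have hk1 : hP.eigenvalues k = 1 :=
        (hP.eigenvalues_eq_zero_or_one hP2 k).resolve_left fun h => hk ⟨⟨k, h⟩, rfl⟩
      simp [hk1]
    · simp [k.2]

end IsHermitian

end Projection

end Matrix

theorem stmt_7_general {n : ℕ} (C P : Matrix (Fin n) (Fin n) ℂ) (r : ℕ)
    (hP : P.IsHermitian) (hP2 : P * P = P) (hPr : P.rank = r)
    (hsub : ∀ f : Fin (n - r + 1) → Fin n, Function.Injective f →
      (C.submatrix f f).PosSemidef) :
    (C ⊙ P).PosSemidef := by
  obtain ⟨A, hAA, hAP⟩ := hP.exists_mul_conjTranspose_eq_one_and_conjTranspose_mul_eq_one_sub hP2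
  have hcard : Fintype.card ({i // hP.eigenvalues i = 0} ⊕ Unit) = n - r + 1 := by
    simp [hP.card_eigenvalues_eq_zero, hPr]
  have hterm : ∀ p, (C ⊙ vecMulVec (minorVec A p) (star (minorVec A p))).PosSemidef := by
    intro p
    by_cases hp : Function.Injective p
    · let e := Fintype.equivFinOfCardEq hcard
      have hCp : (C.submatrix p p).PosSemidef := by
        simpa [Function.comp_def] using (hsub (p ∘ e.symm) (hp.comp e.symm.injective)).submatrix e
      exact posSemidef_hadamard_vecMulVec_star hp hCp fun i hi =>
        minorVec_eq_zero_of_notMem_range A hi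
    · simp [minorVec_eq_zero_of_not_injective A hp, PosSemidef.zero]
  have hsum := posSemidef_sum univ fun p _ => hterm p
  rw [← hadamard_sum, sum_vecMulVec_minorVec hAA, hAP, sub_sub_cancel, hadamard_smul] at hsum
  have hk : (0 : ℂ) ≤ ((Fintype.card {i // hP.eigenvalues i = 0} + 1).factorial : ℂ)⁻¹ := by
    positivity
  simpa [smul_smul, Nat.factorial_ne_zero] using hsum.smul hk

/-- Let `C` be Hermitian and `P` a rank-`r` orthogonal projection with `1 ≤ r ≤ n`. If every
principal submatrix of `C` of order `n - r + 1` is positive semidefinite, then `C ⊙ P` is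
positive semidefinite. -/
theorem stmt_7 {n : ℕ} (C P : Matrix (Fin n) (Fin n) ℂ) (hC : C.IsHermitian)
    (r : ℕ) (hr1 : 1 ≤ r) (hrn : r ≤ n)
    (hP : P.IsHermitian) (hP2 : P * P = P) (hPr : P.rank = r)
    (hsub : ∀ f : Fin (n - r + 1) → Fin n, Function.Injective f →
      (C.submatrix f f).PosSemidef) :
    (C ⊙ P).PosSemidef :=
  stmt_7_general C P r hP hP2 hPr hsub
end

section
/- Let A = [a_ij], B = [b_ij] be n×n complex positive semidefinite matrices. Then λ_min(A ∘ B) ≥ λ_min(A) · min_{1≤i≤n} b_ii. -/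
open Matrix
open scoped Matrix ComplexOrder

/-! Since `λ_min(A) • 1 ≤ A` in the Loewner order and Hadamard multiplication by a positive
semidefinite `B` is monotone for that order (Schur product theorem),
`A ⊙ B ≥ λ_min(A) • (1 ⊙ B) = λ_min(A) • diagonal (b_ii) ≥ λ_min(A) · min_i b_ii • 1`. -/

open scoped MatrixOrder

namespace Matrix

variable {𝕜 ι : Type*} [RCLike 𝕜]

lemma hadamard_le_hadamard_left {A A' B : Matrix ι ι 𝕜} (h : A ≤ A') (hB : B.PosSemidef) :
    A ⊙ B ≤ A' ⊙ B := by
  have : A' ⊙ B - A ⊙ B = (A' - A) ⊙ B := by ext; simp [sub_mul]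
  rw [le_iff, this]
  exact (le_iff.mp h).hadamard hB

variable [Fintype ι] [DecidableEq ι]

lemma IsHermitian.algebraMap_le_iff {A : Matrix ι ι 𝕜} (hA : A.IsHermitian) {t : ℝ} :
    algebraMap ℝ _ t ≤ A ↔ ∀ i, t ≤ hA.eigenvalues i := by
  rw [algebraMap_le_iff_le_spectrum hA.isSelfAdjoint, hA.spectrum_real_eq_range_eigenvalues,
    Set.forall_mem_range]

lemma algebraMap_le_diagonal_iff {d : ι → 𝕜} {t : ℝ} :
    algebraMap ℝ (Matrix ι ι 𝕜) t ≤ diagonal d ↔ ∀ i, (t : 𝕜) ≤ d i := by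
  rw [le_iff, algebraMap_eq_diagonal, diagonal_sub, posSemidef_diagonal_iff]
  simp [sub_nonneg]

lemma IsHermitian.algebraMap_mul_iInf_le_algebraMap_hadamard [Nonempty ι] {B : Matrix ι ι 𝕜}
    (hB : B.IsHermitian) {c : ℝ} (hc : 0 ≤ c) :
    algebraMap ℝ _ (c * ⨅ i, RCLike.re (B i i)) ≤ algebraMap ℝ _ c ⊙ B := by
  rw [Algebra.algebraMap_eq_smul_one c, smul_hadamard, one_hadamard, ← diagonal_smul,
    algebraMap_le_diagonal_iff]
  intro i
  rw [Pi.smul_apply, diag_apply, ← hB.coe_re_apply_self, RCLike.real_smul_eq_coe_mul,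
    ← RCLike.ofReal_mul, RCLike.ofReal_le_ofReal]
  exact mul_le_mul_of_nonneg_left (ciInf_le (Finite.bddBelow_range _) i) hc

end Matrix

lemma le_lambdaMin_iff {n : ℕ} [NeZero n] {A : Matrix (Fin n) (Fin n) ℂ} (hA : A.IsHermitian)
    {t : ℝ} : t ≤ lambdaMin hA ↔ algebraMap ℝ _ t ≤ A := by
  rw [hA.algebraMap_le_iff, lambdaMin, le_ciInf_iff (Finite.bddBelow_range _)]

lemma Matrix.PosSemidef.lambdaMin_nonneg {n : ℕ} {A : Matrix (Fin n) (Fin n) ℂ}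
    (hA : A.PosSemidef) : 0 ≤ lambdaMin hA.1 :=
  Real.iInf_nonneg hA.eigenvalues_nonneg

/-- **Classical bound.** For positive semidefinite `A, B`,
`λ_min(A ⊙ B) ≥ λ_min(A) · min_i b_ii`. -/
theorem stmt_13 {n : ℕ} (A B : Matrix (Fin n) (Fin n) ℂ)
    (hA : A.PosSemidef) (hB : B.PosSemidef) (hAB : (A ⊙ B).IsHermitian) :
    lambdaMin hAB ≥ lambdaMin hA.1 * ⨅ i, (B i i).re := by
  obtain rfl | hn := eq_zero_or_neZero n
  · simp [lambdaMin]
  refine (le_lambdaMin_iff hAB).2 ?_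
  calc algebraMap ℝ _ (lambdaMin hA.1 * ⨅ i, (B i i).re)
      ≤ algebraMap ℝ _ (lambdaMin hA.1) ⊙ B :=
        hB.1.algebraMap_mul_iInf_le_algebraMap_hadamard hA.lambdaMin_nonneg
    _ ≤ A ⊙ B := hadamard_le_hadamard_left ((le_lambdaMin_iff hA.1).1 le_rfl) hB
end

section
/- Let K, P ≥ 1 with distinct real numbers ω₁, …, ω_K ∈ [−π, π), and let V_P(ω) be the P×K Vandermonde matrix with entries [V_P(ω)]_{p,k} = e^{i(p−1)ω_k}. Then the rank of V_P(ω)* V_P(ω) equals min{P, K}, and every list of min{P, K} distinct columns of V_P(ω)* V_P(ω) is linearly independent (i.e., its Kruskal rank equals min{P, K}). -/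
open Matrix
open scoped Matrix ComplexOrder

/-! Put `z_k = e^{iω_k}`. The nodes `z_k` are distinct because the `ω_k` are distinct in a
half-open interval of length `2π`, so any `m ≤ P` columns `(1, z_k, …, z_k^{P-1})` of `V` are
linearly independent: their first `m` coordinates form an invertible Vandermonde matrix. Since
`ker (V* V) = ker V`, the map `V*` is injective on the column space of `V`, so the corresponding
columns of `V* V` are linearly independent as well. This gives the Kruskal rank, and the rank is
squeezed between `min P K` and `rank V ≤ min P K`. -/

theorem linearIndependent_pow_of_card_le {R ι : Type*} [Field R] [Fintype ι] {z : ι → R}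
    (hz : Function.Injective z) {P : ℕ} (hP : Fintype.card ι ≤ P) :
    LinearIndependent R (fun i => fun p : Fin P => z i ^ (p : ℕ)) := by
  let e := Fintype.equivFin ι
  rw [← linearIndependent_equiv e.symm]
  have hsquare : LinearIndependent R (fun i => vandermonde (z ∘ e.symm) i) :=
    linearIndependent_rows_of_det_ne_zero
      (det_vandermonde_ne_zero_iff.2 (hz.comp e.symm.injective))
  exact LinearIndependent.of_comp (LinearMap.funLeft R R (Fin.castLE hP)) hsquare

namespace Matrix

variable {R m n ι : Type*} [Fintype m] [Fintype n]

theorem card_le_rank_of_linearIndependent_col_comp [Field R] {A : Matrix m n R} [Fintype ι]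
    {g : ι → n} (h : LinearIndependent R (A.col ∘ g)) : Fintype.card ι ≤ A.rank := by
  rw [rank_eq_finrank_span_cols, ← finrank_span_eq_card h]
  exact Submodule.finrank_mono (Submodule.span_mono (Set.range_comp_subset_range g A.col))

theorem linearIndependent_col_comp_conjTranspose_mul_self_iff [Field R] [PartialOrder R]
    [StarRing R] [StarOrderedRing R] (A : Matrix m n R) (g : ι → n) :
    LinearIndependent R ((Aᴴ * A).col ∘ g) ↔ LinearIndependent R (A.col ∘ g) := by
  have hcomp : (Aᴴ * A).col ∘ g = Aᴴ.mulVecLin ∘ (A.col ∘ g) := rfl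
  rw [hcomp]
  refine ⟨LinearIndependent.of_comp _, fun h => h.map ?_⟩
  have hspan : Submodule.span R (Set.range (A.col ∘ g)) ≤ LinearMap.range A.mulVecLin := by
    rw [range_mulVecLin]
    exact Submodule.span_mono (Set.range_comp_subset_range g A.col)
  refine Disjoint.mono_left hspan (Submodule.disjoint_def.2 ?_)
  rintro _ ⟨v, rfl⟩ hv
  rw [LinearMap.mem_ker, mulVecLin_apply, mulVecLin_apply, mulVec_mulVec] at hv
  exact (conjTranspose_mul_self_mulVec_eq_zero A v).1 hv

end Matrix

theorem stmt_17_general {K P : ℕ} (ω : Fin K → ℝ)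
    (hω : ∀ k, ω k ∈ Set.Ico (-Real.pi) Real.pi) (hdist : Function.Injective ω)
    (V : Matrix (Fin P) (Fin K) ℂ)
    (hV : ∀ (p : Fin P) (k : Fin K), V p k = Complex.exp (Complex.I * ((p : ℕ) : ℂ) * (ω k : ℂ))) :
    (Vᴴ * V).rank = min P K ∧
      ∀ s : Finset (Fin K), s.card = min P K →
        LinearIndependent ℂ (fun j : s => fun i : Fin K => (Vᴴ * V) i (j : Fin K)) := by
  set z : Fin K → ℂ := fun k => Complex.exp (ω k * Complex.I)
  have hz : Function.Injective z := fun a b hab =>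
    hdist (Circle.exp_injOn_Ico (by linarith) (hω a) (hω b) (Subtype.ext hab))
  have hVcol : V.col = fun k (p : Fin P) => z k ^ (p : ℕ) := by
    ext k p
    rw [col_apply, hV, ← Complex.exp_nat_mul]
    ring_nf
  have hcols (s : Finset (Fin K)) (hs : s.card ≤ P) :
      LinearIndependent ℂ ((Vᴴ * V).col ∘ ((↑) : s → Fin K)) := by
    rw [linearIndependent_col_comp_conjTranspose_mul_self_iff, hVcol]
    exact linearIndependent_pow_of_card_le (hz.comp Subtype.val_injective) (by simpa using hs)
  obtain ⟨s, -, hs⟩ := Finset.exists_subset_card_eq (s := (Finset.univ : Finset (Fin K))) (n := min P K) (by simp)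
  refine ⟨le_antisymm ?_ ?_, fun s hs => hcols s (hs ▸ min_le_left P K)⟩
  · rw [rank_conjTranspose_mul_self]
    exact le_min V.rank_le_height V.rank_le_width
  · simpa [hs] using card_le_rank_of_linearIndependent_col_comp (hcols s (hs ▸ min_le_left P K))

/-- For distinct `ω₁, …, ω_K ∈ [-π, π)`, the matrix `V_P(ω)* V_P(ω)` has rank `min P K` and
Kruskal rank `min P K`: every list of `min P K` distinct columns is linearly independent. -/
theorem stmt_17 {K P : ℕ} (hK : 1 ≤ K) (hP : 1 ≤ P) (ω : Fin K → ℝ)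
    (hω : ∀ k, ω k ∈ Set.Ico (-Real.pi) Real.pi) (hdist : Function.Injective ω)
    (V : Matrix (Fin P) (Fin K) ℂ)
    (hV : ∀ (p : Fin P) (k : Fin K), V p k = Complex.exp (Complex.I * ((p : ℕ) : ℂ) * (ω k : ℂ))) :
    (Vᴴ * V).rank = min P K ∧
      ∀ s : Finset (Fin K), s.card = min P K →
        LinearIndependent ℂ (fun j : s => fun i : Fin K => (Vᴴ * V) i (j : Fin K)) :=
  stmt_17_general ω hω hdist V hV
end
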